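/- arXiv:2201.09547 — 10 statements merged into one kernel-verified Lean document; each statement's English description precedes it below -/
import Mathlib

section
/- The real number E = (5 + 3√2)/7 satisfies T₃(E − 1) = T₃(E/2), where T₃(x) = 4x³ − 3x, and E lies in the open interval (1, 3/2). -/
/-- `E = (5 + 3√2)/7` satisfies `T₃ (E - 1) = T₃ (E / 2)`, where
`T₃ x = 4 x³ - 3 x`, and `E ∈ (1, 3/2)`. -/
theorem E1_kappa3_first_band :
    let E : ℝ := (5 + 3 * Real.sqrt 2) / 7
    (4 * (E - 1) ^ 3 - 3 * (E - 1) = 4 * (E / 2) ^ 3 - 3 * (E / 2)) ∧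
      E ∈ Set.Ioo (1 : ℝ) (3 / 2) := by
  intro E
  have hs : Real.sqrt 2 ^ 2 = 2 := Real.sq_sqrt (by norm_num)
  have h1 : (1.4 : ℝ) < Real.sqrt 2 := by
    nlinarith [Real.sqrt_nonneg 2, hs]
  have h2 : Real.sqrt 2 < 1.5 := by
    nlinarith [Real.sqrt_nonneg 2, hs]
  refine ⟨?_, ?_, ?_⟩
  · show (4 : ℝ) * ((5 + 3 * Real.sqrt 2) / 7 - 1) ^ 3 - 3 * ((5 + 3 * Real.sqrt 2) / 7 - 1) =
      4 * ((5 + 3 * Real.sqrt 2) / 7 / 2) ^ 3 - 3 * ((5 + 3 * Real.sqrt 2) / 7 / 2)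
    nlinarith [hs, Real.sqrt_nonneg 2]
  · show (1 : ℝ) < (5 + 3 * Real.sqrt 2) / 7
    linarith
  · show (5 + 3 * Real.sqrt 2) / 7 < (3 : ℝ) / 2
    linarith
end

section
/- The real number E = 8/5 satisfies T₄(E − 1) = T₄(E/2), where T₄(x) = 8x⁴ − 8x² + 1, and E lies in the open interval (√2, 1 + √2/2). Moreover (E − 1)² + (E/2)² = 1. -/
/-- `E = 8/5` satisfies `T₄ (E - 1) = T₄ (E / 2)`, where `T₄ x = 8 x⁴ - 8 x² + 1`,
`E ∈ (√2, 1 + √2/2)`, and `(E - 1)² + (E/2)² = 1`. -/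
theorem E1_kappa4_first_band :
    let E : ℝ := 8 / 5
    (8 * (E - 1) ^ 4 - 8 * (E - 1) ^ 2 + 1
        = 8 * (E / 2) ^ 4 - 8 * (E / 2) ^ 2 + 1) ∧
      E ∈ Set.Ioo (Real.sqrt 2) (1 + Real.sqrt 2 / 2) ∧
      (E - 1) ^ 2 + (E / 2) ^ 2 = 1 := by
  intro E
  have h2 : Real.sqrt 2 < 8 / 5 := by
    rw [show (8:ℝ)/5 = Real.sqrt ((8/5)^2) by rw [Real.sqrt_sq]; norm_num]
    exact Real.sqrt_lt_sqrt (by norm_num) (by norm_num)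
  refine ⟨by norm_num [E], ⟨h2, ?_⟩, by norm_num [E]⟩
  have : (6:ℝ)/5 < Real.sqrt 2 := by
    rw [show (6:ℝ)/5 = Real.sqrt ((6/5)^2) by rw [Real.sqrt_sq]; norm_num]
    exact Real.sqrt_lt_sqrt (by norm_num) (by norm_num)
  show (8:ℝ)/5 < 1 + Real.sqrt 2 / 2
  linarith
end

section
/- The real number E = (49 + 12√10 + √(5(49 + 12√10)))/62 satisfies T₅(E − 1) = T₅(E/2), and E lies in the open interval (2cos(π/5), 1 + cos(π/5)). -/
open Polynomial Real

lemma T5_eval (x : ℝ) : (Polynomial.Chebyshev.T ℝ 5).eval x = 16*x^5 - 20*x^3 + 5*x := by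
  have e3 : Chebyshev.T ℝ 3 = 2*X*Chebyshev.T ℝ 2 - Chebyshev.T ℝ 1 := Chebyshev.T_add_two ℝ 1
  have e4 : Chebyshev.T ℝ 4 = 2*X*Chebyshev.T ℝ 3 - Chebyshev.T ℝ 2 := Chebyshev.T_add_two ℝ 2
  have e5 : Chebyshev.T ℝ 5 = 2*X*Chebyshev.T ℝ 4 - Chebyshev.T ℝ 3 := Chebyshev.T_add_two ℝ 3
  rw [e5, e4, e3, Chebyshev.T_two, Chebyshev.T_one]
  simp only [eval_sub, eval_mul, eval_ofNat, eval_X, eval_one, eval_pow, eval_add]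
  ring

/-- `E = (49 + 12√10 + √(5(49 + 12√10)))/62` satisfies `T₅ (E - 1) = T₅ (E / 2)`,
and `E ∈ (2 cos (π/5), 1 + cos (π/5))`. -/
theorem E1_kappa5_first_band :
    let E : ℝ := (49 + 12 * Real.sqrt 10 +
      Real.sqrt (5 * (49 + 12 * Real.sqrt 10))) / 62
    ((Polynomial.Chebyshev.T ℝ 5).eval (E - 1)
        = (Polynomial.Chebyshev.T ℝ 5).eval (E / 2)) ∧
      E ∈ Set.Ioo (2 * Real.cos (π / 5)) (1 + Real.cos (π / 5)) := by
  intro E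
  set s : ℝ := Real.sqrt 10 with hs_def
  have hs0 : 0 ≤ s := Real.sqrt_nonneg _
  have hs : s ^ 2 = 10 := Real.sq_sqrt (by norm_num)
  have harg : (0:ℝ) ≤ 5 * (49 + 12 * s) := by nlinarith
  set t : ℝ := Real.sqrt (5 * (49 + 12 * s)) with ht_def
  have ht0 : 0 ≤ t := Real.sqrt_nonneg _
  have ht : t ^ 2 = 245 + 60 * s := by
    rw [ht_def, Real.sq_sqrt harg]; ring
  have hE : E = (49 + 12 * s + t) / 62 := rfl
  constructor
  · rw [T5_eval, T5_eval, hE]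
    linear_combination
      ((205575 - 3125*t - 75*t^2 + t^3) / 59105344
        + s * (-(6945:ℝ)/3694084 - 885*t/14776336 + 15*t^2/14776336)
        + s^2 * (-(3825:ℝ)/3694084 + 45*t/1847042)
        + s^3 * (270/923521)) * ht
      + ((337725:ℝ)/3694084 - 17415*t/3694084 - 43335*s/923521 - 6750*s*t/923521
        - 8100*s^2/923521 + 1620*s^2*t/923521 + 3888*s^3/923521) * hs
  · rw [Real.cos_pi_div_five]
    set u : ℝ := Real.sqrt 5 with hu_def
    have hu0 : 0 ≤ u := Real.sqrt_nonneg _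
    have hu : u ^ 2 = 5 := Real.sq_sqrt (by norm_num)
    have hsl : 3.16 < s := by nlinarith
    have hsu : s < 3.17 := by nlinarith
    have htl : 20.8 < t := by nlinarith
    have htu : t < 21 := by nlinarith
    have hul : 2.23 < u := by nlinarith
    have huu : u < 2.24 := by nlinarith
    constructor
    · rw [hE]; nlinarith
    · rw [hE]; nlinarith
end

section
/- The real number E = 1 + √(2/3) satisfies T₆(E − 1) = T₆(E/2), and E lies in the open interval (√3, 1 + √3/2). -/
open Polynomial Real

theorem evalT6_aux (x : ℝ) :
    (Polynomial.Chebyshev.T ℝ 6).eval x = 32*x^6-48*x^4+18*x^2-1 := by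
  have h : ∀ n : ℤ, (Polynomial.Chebyshev.T ℝ (n+2)).eval x
      = 2*x*(Polynomial.Chebyshev.T ℝ (n+1)).eval x - (Polynomial.Chebyshev.T ℝ n).eval x := by
    intro n; rw [Polynomial.Chebyshev.T_add_two]; simp
  have e2 := h 0; have e3 := h 1; have e4 := h 2; have e5 := h 3; have e6 := h 4
  norm_num at e2 e3 e4 e5 e6
  rw [e6, e5, e4, e3, e2]; ring

/-- `E = 1 + √(2/3)` satisfies `T₆ (E - 1) = T₆ (E / 2)`, and
`E ∈ (√3, 1 + √3/2)`. -/
theorem E1_kappa6_first_band :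
    let E : ℝ := 1 + Real.sqrt (2 / 3)
    ((Polynomial.Chebyshev.T ℝ 6).eval (E - 1)
        = (Polynomial.Chebyshev.T ℝ 6).eval (E / 2)) ∧
      E ∈ Set.Ioo (Real.sqrt 3) (1 + Real.sqrt 3 / 2) := by
  intro E
  set s : ℝ := Real.sqrt (2 / 3) with hs
  have hs2 : s ^ 2 = 2 / 3 := Real.sq_sqrt (by norm_num)
  constructor
  · rw [evalT6_aux, evalT6_aux]
    show 32*((1+s)-1)^6 - 48*((1+s)-1)^4 + 18*((1+s)-1)^2 - 1
        = 32*((1+s)/2)^6 - 48*((1+s)/2)^4 + 18*((1+s)/2)^2 - 1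
    linear_combination (63/2*s^4 - 3*s^3 - 63/2*s^2 + 3) * hs2
  · have h3 : Real.sqrt 3 ^ 2 = 3 := Real.sq_sqrt (by norm_num)
    have hsn : (0:ℝ) ≤ s := Real.sqrt_nonneg _
    have h3n : (0:ℝ) ≤ Real.sqrt 3 := Real.sqrt_nonneg _
    constructor
    · show Real.sqrt 3 < 1 + s
      rw [show Real.sqrt 3 < 1 + s ↔ (3:ℝ) < (1+s)^2 from Real.sqrt_lt' (by positivity)]
      nlinarith [hs2, hsn]
    · show 1 + s < 1 + Real.sqrt 3 / 2
      nlinarith [hs2, h3, hsn, h3n]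
end

section
/- The real number E = (16 + 3√2 + 2√(26 + 7√2))/17 satisfies T₈(E − 1) = T₈(E/2), and E lies in the open interval (2cos(π/8), 1 + cos(π/8)). -/
open Polynomial Real

private lemma T8_eval (x : ℝ) : (Chebyshev.T ℝ 8).eval x
    = 128*x^8 - 256*x^6 + 160*x^4 - 32*x^2 + 1 := by
  have e0 : (Chebyshev.T ℝ 0).eval x = 1 := by simp
  have e1 : (Chebyshev.T ℝ 1).eval x = x := by simp
  have step : ∀ n : ℤ, (Chebyshev.T ℝ (n+2)).eval x
      = 2 * x * (Chebyshev.T ℝ (n+1)).eval x - (Chebyshev.T ℝ n).eval x := by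
    intro n; rw [Chebyshev.T_add_two]; simp
  have e2 : (Chebyshev.T ℝ 2).eval x = 2*x^2 - 1 := by
    rw [show (2:ℤ) = 0+2 by norm_num, step]; norm_num [e0, e1]; ring
  have e3 : (Chebyshev.T ℝ 3).eval x = 4*x^3 - 3*x := by
    rw [show (3:ℤ) = 1+2 by norm_num, step]; norm_num [e1, e2]; ring
  have e4 : (Chebyshev.T ℝ 4).eval x = 8*x^4 - 8*x^2 + 1 := by
    rw [show (4:ℤ) = 2+2 by norm_num, step]; norm_num [e2, e3]; ring
  have e5 : (Chebyshev.T ℝ 5).eval x = 16*x^5 - 20*x^3 + 5*x := by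
    rw [show (5:ℤ) = 3+2 by norm_num, step]; norm_num [e3, e4]; ring
  have e6 : (Chebyshev.T ℝ 6).eval x = 32*x^6 - 48*x^4 + 18*x^2 - 1 := by
    rw [show (6:ℤ) = 4+2 by norm_num, step]; norm_num [e4, e5]; ring
  have e7 : (Chebyshev.T ℝ 7).eval x = 64*x^7 - 112*x^5 + 56*x^3 - 7*x := by
    rw [show (7:ℤ) = 5+2 by norm_num, step]; norm_num [e5, e6]; ring
  rw [show (8:ℤ) = 6+2 by norm_num, step]; norm_num [e6, e7]; ring

private lemma key_identity (s t : ℝ) (hs : s^2 = 2) (ht : t^2 = 26 + 7*s) :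
    128*((16 + 3*s + 2*t)/17 - 1)^8 - 256*((16 + 3*s + 2*t)/17 - 1)^6
      + 160*((16 + 3*s + 2*t)/17 - 1)^4 - 32*((16 + 3*s + 2*t)/17 - 1)^2 + 1
    = 128*((16 + 3*s + 2*t)/17/2)^8 - 256*((16 + 3*s + 2*t)/17/2)^6
      + 160*((16 + 3*s + 2*t)/17/2)^4 - 32*((16 + 3*s + 2*t)/17/2)^2 + 1 := by
  linear_combination ((20739360/410338673 : ℝ) + (30825280/410338673 : ℝ) * t^1 + (-348242832/410338673 : ℝ) * s^1 + (-77834288/410338673 : ℝ) * s^1 * t^1 + (-118192932/410338673 : ℝ) * s^2 + (-15506496/410338673 : ℝ) * s^2 * t^1 + (76514112/410338673 : ℝ) * s^3 + (16881696/410338673 : ℝ) * s^3 * t^1 + (37091763/410338673 : ℝ) * s^4 + (5062176/410338673 : ℝ) * s^4 * t^1 + (4146552/410338673 : ℝ) * s^5 + (262440/410338673 : ℝ) * s^5 * t^1 + (98415/820677346 : ℝ) * s^6) * hs +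
  ((-26901408/410338673 : ℝ) + (-3213312/410338673 : ℝ) * t^1 + (6943584/410338673 : ℝ) * t^2 + (602112/410338673 : ℝ) * t^3 + (-224256/410338673 : ℝ) * t^4 + (-8192/410338673 : ℝ) * t^5 + (1920/410338673 : ℝ) * t^6 + (32767392/410338673 : ℝ) * s^1 + (1811008/24137569 : ℝ) * s^1 * t^1 + (2656512/410338673 : ℝ) * s^1 * t^2 + (-1925888/410338673 : ℝ) * s^1 * t^3 + (-72576/410338673 : ℝ) * s^1 * t^4 + (23040/410338673 : ℝ) * s^1 * t^5 + (65808/1419857 : ℝ) * s^2 + (-1011968/410338673 : ℝ) * s^2 * t^1 + (-6616512/410338673 : ℝ) * s^2 * t^2 + (-225792/410338673 : ℝ) * s^2 * t^3 + (120960/410338673 : ℝ) * s^2 * t^4 + (-21950784/410338673 : ℝ) * s^3 + (-10652544/410338673 : ℝ) * s^3 * t^1 + (-120960/410338673 : ℝ) * s^3 * t^2 + (362880/410338673 : ℝ) * s^3 * t^3 + (-3976560/410338673 : ℝ) * s^4 + (1088640/410338673 : ℝ) * s^4 * t^1 + (680400/410338673 : ℝ) * s^4 * t^2 + (3456432/410338673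 : ℝ) * s^5 + (816480/410338673 : ℝ) * s^5 * t^1 + (612360/410338673 : ℝ) * s^6) * ht

/-- `E = (16 + 3√2 + 2√(26 + 7√2))/17` satisfies `T₈ (E - 1) = T₈ (E / 2)`, and
`E ∈ (2 cos (π/8), 1 + cos (π/8))`. -/
theorem E1_kappa8_first_band :
    let E : ℝ := (16 + 3 * Real.sqrt 2 +
      2 * Real.sqrt (26 + 7 * Real.sqrt 2)) / 17
    ((Polynomial.Chebyshev.T ℝ 8).eval (E - 1)
        = (Polynomial.Chebyshev.T ℝ 8).eval (E / 2)) ∧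
      E ∈ Set.Ioo (2 * Real.cos (π / 8)) (1 + Real.cos (π / 8)) := by
  intro E
  set s : ℝ := Real.sqrt 2 with hs_def
  set t : ℝ := Real.sqrt (26 + 7 * Real.sqrt 2) with ht_def
  have hs : s^2 = 2 := Real.sq_sqrt (by norm_num)
  have hs0 : (0:ℝ) ≤ s := Real.sqrt_nonneg _
  have ht : t^2 = 26 + 7*s := by
    rw [ht_def, Real.sq_sqrt (by positivity)]
  have ht0 : (0:ℝ) ≤ t := Real.sqrt_nonneg _
  -- numeric bounds
  have hs1 : (1.4142 : ℝ) < s := by nlinarith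
  have hs2 : s < (1.41422 : ℝ) := by nlinarith
  have ht1 : (5.9916 : ℝ) < t := by nlinarith
  have ht2 : t < (5.99163 : ℝ) := by nlinarith
  constructor
  · rw [T8_eval, T8_eval]
    have hE : E = (16 + 3*s + 2*t)/17 := by rw [hs_def, ht_def]
    rw [hE]
    exact key_identity s t hs ht
  · rw [Real.cos_pi_div_eight]
    set u : ℝ := Real.sqrt (2 + Real.sqrt 2) with hu_def
    have hu2 : u^2 = 2 + s := Real.sq_sqrt (by positivity)
    have hu0 : (0:ℝ) ≤ u := Real.sqrt_nonneg _
    have hu1 : (1.8477 : ℝ) < u := by nlinarith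
    have hu3 : u < (1.84777 : ℝ) := by nlinarith
    constructor
    · show 2 * (u / 2) < E
      have : E = (16 + 3*s + 2*t)/17 := by rw [hs_def, ht_def]
      rw [this]; linarith
    · show E < 1 + u / 2
      have : E = (16 + 3*s + 2*t)/17 := by rw [hs_def, ht_def]
      rw [this]; linarith
end

section
/- A real number E satisfies (E − 1)² + (E − √2/2)² = 1 if and only if E = (2 + √2 + √(2 + 4√2))/4 or E = (2 + √2 − √(2 + 4√2))/4. Moreover E = (2 + √2 + √(2 + 4√2))/4 satisfies T₄(E − 1) = T₄(E − √2/2), where T₄(x) = 8x⁴ − 8x² + 1, and this E lies in the open interval (√2, 1 + √2/2). -/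
/-- A real `E` satisfies `(E - 1)² + (E - √2/2)² = 1` iff
`E = (2 + √2 ± √(2 + 4√2))/4`. Moreover `E = (2 + √2 + √(2 + 4√2))/4`
satisfies `T₄ (E - 1) = T₄ (E - √2/2)` with `T₄ x = 8 x⁴ - 8 x² + 1`, and
lies in `(√2, 1 + √2/2)`. -/
theorem E2_kappa4_second_band :
    (∀ E : ℝ,
      (E - 1) ^ 2 + (E - Real.sqrt 2 / 2) ^ 2 = 1 ↔
        E = (2 + Real.sqrt 2 + Real.sqrt (2 + 4 * Real.sqrt 2)) / 4 ∨
        E = (2 + Real.sqrt 2 - Real.sqrt (2 + 4 * Real.sqrt 2)) / 4) ∧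
    (let E : ℝ := (2 + Real.sqrt 2 + Real.sqrt (2 + 4 * Real.sqrt 2)) / 4;
      (8 * (E - 1) ^ 4 - 8 * (E - 1) ^ 2 + 1
          = 8 * (E - Real.sqrt 2 / 2) ^ 4
            - 8 * (E - Real.sqrt 2 / 2) ^ 2 + 1) ∧
        E ∈ Set.Ioo (Real.sqrt 2) (1 + Real.sqrt 2 / 2)) := by
  have hs : Real.sqrt 2 ^ 2 = 2 := Real.sq_sqrt (by norm_num)
  have hs0 : (0:ℝ) ≤ Real.sqrt 2 := Real.sqrt_nonneg 2
  have hs1 : (1:ℝ) ≤ Real.sqrt 2 := by nlinarith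
  have hr : Real.sqrt (2 + 4 * Real.sqrt 2) ^ 2 = 2 + 4 * Real.sqrt 2 :=
    Real.sq_sqrt (by positivity)
  have hr0 : (0:ℝ) ≤ Real.sqrt (2 + 4 * Real.sqrt 2) := Real.sqrt_nonneg _
  constructor
  · intro E
    constructor
    · intro h
      have key : (E - (2 + Real.sqrt 2 + Real.sqrt (2 + 4 * Real.sqrt 2)) / 4) *
          (E - (2 + Real.sqrt 2 - Real.sqrt (2 + 4 * Real.sqrt 2)) / 4) = 0 := by
        nlinarith [h, hs, hr]
      rcases mul_eq_zero.mp key with h1 | h2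
      · left; linarith
      · right; linarith
    · rintro (rfl | rfl) <;> nlinarith [hs, hr]
  · refine ⟨?_, ?_, ?_⟩
    · nlinarith [hs, hr]
    · nlinarith [hs, hr, hr0, hs1, sq_nonneg (Real.sqrt (2 + 4 * Real.sqrt 2) - 3 * Real.sqrt 2 + 2)]
    · nlinarith [hs, hr, hr0, hs1, sq_nonneg (Real.sqrt (2 + 4 * Real.sqrt 2) - Real.sqrt 2 - 2)]
end

section
/- Let E be a real number with √2 < E < 1 + √2/2. If 1 − (E − √(1 − E²/4))² = (E − √(E(2 − E)))², then 3825E³ − 6048E² + 22784E − 32768 = 0. -/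
/-- Fifth band, `κ = 4`: if `√2 < E < 1 + √2/2` and
`1 - (E - √(1 - E²/4))² = (E - √(E(2 - E)))²`, then
`3825E³ - 6048E² + 22784E - 32768 = 0`. -/
theorem E5_kappa4_minimal_polynomial (E : ℝ)
    (h1 : Real.sqrt 2 < E) (h2 : E < 1 + Real.sqrt 2 / 2)
    (h : 1 - (E - Real.sqrt (1 - E ^ 2 / 4)) ^ 2
        = (E - Real.sqrt (E * (2 - E))) ^ 2) :
    3825 * E ^ 3 - 6048 * E ^ 2 + 22784 * E - 32768 = 0 := by
  have hs2 : (1:ℝ) < Real.sqrt 2 := by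
    have := Real.lt_sqrt (x := 1) (y := 2) (by norm_num)
    simpa using this.mpr (by norm_num)
  have hs2' : Real.sqrt 2 < 2 := by
    have := Real.sqrt_lt' (x := 2) (y := 2)
    simp at this
    nlinarith [Real.sq_sqrt (by norm_num : (2:ℝ) ≥ 0), Real.sqrt_nonneg 2]
  have hE0 : 0 < E := by linarith
  have hE2 : E < 2 := by linarith
  set a := Real.sqrt (1 - E ^ 2 / 4) with ha
  set b := Real.sqrt (E * (2 - E)) with hb
  have ha0 : 0 ≤ a := Real.sqrt_nonneg _
  have hb0 : 0 ≤ b := Real.sqrt_nonneg _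
  have ha2 : a ^ 2 = 1 - E ^ 2 / 4 := Real.sq_sqrt (by nlinarith)
  have hb2 : b ^ 2 = E * (2 - E) := Real.sq_sqrt (by nlinarith)
  have h3 : E * (2 * a + 2 * b) = E * (2 + 3 * E / 4) := by nlinarith [h, ha2, hb2]
  have h4 : 2 * a + 2 * b = 2 + 3 * E / 4 := mul_left_cancel₀ (ne_of_gt hE0) h3
  have h4sq : (2 * a + 2 * b) ^ 2 = (2 + 3 * E / 4) ^ 2 := by rw [h4]
  have h5 : 8 * (a * b) = 89 * E ^ 2 / 16 - 5 * E := by nlinarith [h4sq, ha2, hb2]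
  have h5sq : (8 * (a * b)) ^ 2 = (89 * E ^ 2 / 16 - 5 * E) ^ 2 := by rw [h5]
  have habsq : (a * b) ^ 2 = (1 - E ^ 2 / 4) * (E * (2 - E)) := by
    rw [mul_pow, ha2, hb2]
  have hq : E * (3825 * E ^ 3 - 6048 * E ^ 2 + 22784 * E - 32768) = 0 := by
    linear_combination (-256 : ℝ) * h5sq + (16384 : ℝ) * habsq
  rcases mul_eq_zero.mp hq with h' | h'
  · exact absurd h' (ne_of_gt hE0)
  · exact h'
end

section
/- Let E be a real number with √2 < E < 1 + √2/2. If (E − √(E(2 − E)))² + (E − √(1 − (E − √2/2)²))² = 1, then 384E⁶ + (−448 − 224√2)E⁵ + (200 + 128√2)E⁴ + (−72 − 52√2)E³ + (16 + 12√2)E² + (−2 − √2)E + 1/8 = 0. -/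
/-- Sixth band, `κ = 4`: if `√2 < E < 1 + √2/2` and
`(E - √(E(2 - E)))² + (E - √(1 - (E - √2/2)²))² = 1`, then
`384E⁶ + (-448 - 224√2)E⁵ + (200 + 128√2)E⁴ + (-72 - 52√2)E³
  + (16 + 12√2)E² + (-2 - √2)E + 1/8 = 0`. -/
theorem E6_kappa4_minimal_polynomial (E : ℝ)
    (h1 : Real.sqrt 2 < E) (h2 : E < 1 + Real.sqrt 2 / 2)
    (h : (E - Real.sqrt (E * (2 - E))) ^ 2
        + (E - Real.sqrt (1 - (E - Real.sqrt 2 / 2) ^ 2)) ^ 2 = 1) :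
    384 * E ^ 6 + (-448 - 224 * Real.sqrt 2) * E ^ 5
      + (200 + 128 * Real.sqrt 2) * E ^ 4 + (-72 - 52 * Real.sqrt 2) * E ^ 3
      + (16 + 12 * Real.sqrt 2) * E ^ 2 + (-2 - Real.sqrt 2) * E + 1 / 8 = 0 := by
  set s := Real.sqrt 2 with hsdef
  have hs : s ^ 2 = 2 := Real.sq_sqrt (by norm_num)
  have hs0 : 0 ≤ s := Real.sqrt_nonneg 2
  have hslt : s < 3 / 2 := by nlinarith
  have hE0 : 0 < E := lt_of_le_of_lt hs0 h1
  have hA : 0 ≤ E * (2 - E) := by nlinarith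
  have hB : 0 ≤ 1 - (E - s / 2) ^ 2 := by nlinarith
  set a := Real.sqrt (E * (2 - E)) with hadef
  set b := Real.sqrt (1 - (E - s / 2) ^ 2) with hbdef
  have ha : a ^ 2 = E * (2 - E) := Real.sq_sqrt hA
  have hb : b ^ 2 = 1 - (E - s / 2) ^ 2 := Real.sq_sqrt hB
  have key : 2 * E * (a + b) = 2 * E + s * E - 1 / 2 := by
    linear_combination -h + ha + hb - hs / 4
  have h8 : 8 * E ^ 2 * (a * b)
      = (2 * E + s * E - 1 / 2) ^ 2 - 4 * E ^ 2 * (a ^ 2 + b ^ 2) := by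
    linear_combination (2 * E * (a + b) + (2 * E + s * E - 1 / 2)) * key
  have h64 : 64 * E ^ 4 * (a ^ 2 * b ^ 2)
      = ((2 * E + s * E - 1 / 2) ^ 2 - 4 * E ^ 2 * (a ^ 2 + b ^ 2)) ^ 2 := by
    linear_combination
      (8 * E ^ 2 * (a * b)
        + ((2 * E + s * E - 1 / 2) ^ 2 - 4 * E ^ 2 * (a ^ 2 + b ^ 2))) * h8
  rw [ha, hb] at h64
  linear_combination (-2) * h64
    + (-4 * E ^ 2 + 32 * E ^ 3 + 8 * s * E ^ 3 - 64 * E ^ 4 - 32 * s * E ^ 4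
        - 8 * s ^ 2 * E ^ 4 + 64 * E ^ 5 + 32 * s * E ^ 5 - 64 * E ^ 6) * hs
end

section
/- Let E be a real number with 1 < E < 3/2, and set X₁ = −1/2 + 3E/2 − (√3/2)·√(E(2 − E)) and X₂ = −E/4 + (√3/4)·√(4 − E²). If 4(9E²/4 − 4E·X₁ + X₁·X₂ − 3E + 1 + (5E/2)·X₂ + X₁) = 3, then 372775E⁸ − 750010E⁷ + 536359E⁶ − 270784E⁵ + 128593E⁴ − 36442E³ + 4333E² − 220E + 4 = 0. -/
/-- Fifth band, `κ = 3`: with `1 < E < 3/2`,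
`X₁ = -1/2 + 3E/2 - (√3/2)√(E(2 - E))` and `X₂ = -E/4 + (√3/4)√(4 - E²)`,
if `4(9E²/4 - 4E X₁ + X₁ X₂ - 3E + 1 + (5E/2) X₂ + X₁) = 3` then
`372775E⁸ - 750010E⁷ + 536359E⁶ - 270784E⁵ + 128593E⁴ - 36442E³
  + 4333E² - 220E + 4 = 0`. -/
theorem E5_kappa3_minimal_polynomial (E : ℝ)
    (h1 : 1 < E) (h2 : E < 3 / 2)
    (h : 4 * (9 * E ^ 2 / 4
        - 4 * E * (-1 / 2 + 3 * E / 2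
            - Real.sqrt 3 / 2 * Real.sqrt (E * (2 - E)))
        + (-1 / 2 + 3 * E / 2 - Real.sqrt 3 / 2 * Real.sqrt (E * (2 - E)))
            * (-E / 4 + Real.sqrt 3 / 4 * Real.sqrt (4 - E ^ 2))
        - 3 * E + 1
        + (5 * E / 2) * (-E / 4 + Real.sqrt 3 / 4 * Real.sqrt (4 - E ^ 2))
        + (-1 / 2 + 3 * E / 2
            - Real.sqrt 3 / 2 * Real.sqrt (E * (2 - E)))) = 3) :
    372775 * E ^ 8 - 750010 * E ^ 7 + 536359 * E ^ 6 - 270784 * E ^ 5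
      + 128593 * E ^ 4 - 36442 * E ^ 3 + 4333 * E ^ 2 - 220 * E + 4 = 0 := by
  set s := Real.sqrt 3 with hs
  set a := Real.sqrt (E * (2 - E)) with ha
  set b := Real.sqrt (4 - E ^ 2) with hb
  have hs2 : s ^ 2 = 3 := Real.sq_sqrt (by norm_num)
  have ha2 : a ^ 2 = E * (2 - E) := Real.sq_sqrt (by nlinarith)
  have hb2 : b ^ 2 = 4 - E ^ 2 := Real.sq_sqrt (by nlinarith)
  -- abbreviations
  have e1 : (-38 * E ^ 2 + 5 * E - 2) + s * ((17 * E - 4) * a + (8 * E - 1) * b)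
      - 3 * (a * b) = 0 := by
    linear_combination 2 * h + (a * b) * hs2
  have e2 : ((-38 * E ^ 2 + 5 * E - 2) - 3 * (a * b)) ^ 2
      = 3 * ((17 * E - 4) * a + (8 * E - 1) * b) ^ 2 := by
    linear_combination
      ((-38 * E ^ 2 + 5 * E - 2) - 3 * (a * b)
        - s * ((17 * E - 4) * a + (8 * E - 1) * b)) * e1
      + ((17 * E - 4) * a + (8 * E - 1) * b) ^ 2 * hs2
  have e3 : (-6 * (-38 * E ^ 2 + 5 * E - 2) - 6 * (17 * E - 4) * (8 * E - 1)) * (a * b)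
      = 3 * (17 * E - 4) ^ 2 * (E * (2 - E)) + 3 * (8 * E - 1) ^ 2 * (4 - E ^ 2)
        - (-38 * E ^ 2 + 5 * E - 2) ^ 2 - 9 * (E * (2 - E)) * (4 - E ^ 2) := by
    linear_combination e2 + (3 * (17 * E - 4) ^ 2 - 9 * b ^ 2) * ha2
      + (3 * (8 * E - 1) ^ 2 - 9 * (E * (2 - E))) * hb2
  linear_combination
    (-1 / 16) * ((-6 * (-38 * E ^ 2 + 5 * E - 2) - 6 * (17 * E - 4) * (8 * E - 1)) * (a * b)
      + (3 * (17 * E - 4) ^ 2 * (E * (2 - E)) + 3 * (8 * E - 1) ^ 2 * (4 - E ^ 2)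
        - (-38 * E ^ 2 + 5 * E - 2) ^ 2 - 9 * (E * (2 - E)) * (4 - E ^ 2))) * e3
    + (1 / 16) * ((-6 * (-38 * E ^ 2 + 5 * E - 2) - 6 * (17 * E - 4) * (8 * E - 1)) ^ 2 * b ^ 2) * ha2
    + (1 / 16) * ((-6 * (-38 * E ^ 2 + 5 * E - 2) - 6 * (17 * E - 4) * (8 * E - 1)) ^ 2 * (E * (2 - E))) * hb2
end

section
/- For every positive integer j, U_{4j−1}(√2/√3) = −√2 · U_{4j−1}(1/√3), where U_n denotes the n-th Chebyshev polynomial of the second kind. -/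
/-- For every positive integer `j`,
`U_{4j-1}(√2/√3) = -√2 · U_{4j-1}(1/√3)`, where `U` is the Chebyshev
polynomial of the second kind. -/
theorem U_four_j_sub_one_relation (j : ℕ) (hj : 0 < j) :
    (Polynomial.Chebyshev.U ℝ (4 * (j : ℤ) - 1)).eval
        (Real.sqrt 2 / Real.sqrt 3)
      = -Real.sqrt 2 *
        (Polynomial.Chebyshev.U ℝ (4 * (j : ℤ) - 1)).eval (1 / Real.sqrt 3) := by
  have h3 : (0:ℝ) < Real.sqrt 3 := Real.sqrt_pos.mpr (by norm_num)
  have h2 : (0:ℝ) < Real.sqrt 2 := Real.sqrt_pos.mpr (by norm_num)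
  set θ := Real.arcsin (1 / Real.sqrt 3) with hθ
  have hbound : 1 / Real.sqrt 3 ≤ 1 := by
    rw [div_le_one h3]
    nlinarith [Real.sq_sqrt (by norm_num : (3:ℝ) ≥ 0)]
  have hsin : Real.sin θ = 1 / Real.sqrt 3 :=
    Real.sin_arcsin (by linarith [one_div_pos.mpr h3]) hbound
  have hcos : Real.cos θ = Real.sqrt 2 / Real.sqrt 3 := by
    rw [hθ, Real.cos_arcsin]
    have h : (1:ℝ) - (1/Real.sqrt 3)^2 = 2/3 := by
      rw [div_pow, one_pow, Real.sq_sqrt (by norm_num : (0:ℝ) ≤ 3)]; norm_num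
    rw [h, Real.sqrt_div (by norm_num : (0:ℝ) ≤ 2) 3]
  have key1 := Polynomial.Chebyshev.U_real_cos θ (4 * (j:ℤ) - 1)
  have key2 := Polynomial.Chebyshev.U_real_cos (Real.pi/2 - θ) (4 * (j:ℤ) - 1)
  rw [Real.cos_pi_div_two_sub, Real.sin_pi_div_two_sub] at key2
  rw [hsin, hcos] at key1 key2
  have harg : ((4 * (j:ℤ) - 1 : ℤ) + 1 : ℝ) * (Real.pi/2 - θ)
      = (j:ℤ) * (2 * Real.pi) - ((4 * (j:ℤ) - 1 : ℤ) + 1 : ℝ) * θ := by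
    push_cast
    ring
  rw [harg, Real.sin_int_mul_two_pi_sub] at key2
  have hs3 : Real.sqrt 3 ≠ 0 := ne_of_gt h3
  have hs2 : Real.sqrt 2 ≠ 0 := ne_of_gt h2
  field_simp at key1 key2 ⊢
  nlinarith [key1, key2, Real.sq_sqrt (by norm_num : (2:ℝ) ≥ 0), Real.sq_sqrt (by norm_num : (3:ℝ) ≥ 0), h2, h3]
end
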